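/- Let Λ be a finite Borel measure on [0,1] with Λ({0}) = 0, and for integers n ≥ 2 define γ(n) := ∫_{(0,1]} (1 − (1−z)^n) z^{−1} Λ(dz). Then ∑_{n=2}^{∞} γ(n)/(C(n,2) + γ(n)) < ∞ if and only if ∫_{(0,1]} (−log z) Λ(dz) < ∞, where C(n,2) = n(n−1)/2. -/

import Mathlib

open MeasureTheory Set

/-!
Since `0 ≤ γ(n) ≤ n Λ(0,1]`, the terms `γ(n)/(C(n,2)+γ(n))` are comparable to `γ(n)/C(n,2)`.
Expanding `(1-(1-z)^m)/z = ∑_{k<m} (1-z)^k` and exchanging the sums, the telescoping tails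
`∑_{m>k, m≥2} 1/C(m,2) = 2/max(k,1)` give, for `0 < z ≤ 1`, the exact identity
`∑_{m≥2} (1-(1-z)^m)/(z C(m,2)) = 2 + 2 ∑_{k≥1} (1-z)^k/k = 2 - 2 log z`.
Integrating against `Λ` yields `∑_{m≥2} γ(m)/C(m,2) = 2 Λ(0,1] + 2 ∫ (-log z) Λ(dz)`.
-/

lemma summable_div_add_iff_summable_div {ι : Type*} {a b : ι → ℝ} {C : ℝ}
    (ha : ∀ i, 0 ≤ a i) (hb : ∀ i, 0 < b i) (hab : ∀ i, a i ≤ C * b i) :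
    Summable (fun i => a i / (b i + a i)) ↔ Summable (fun i => a i / b i) := by
  constructor
  · intro h
    refine (h.mul_left (1 + C)).of_nonneg_of_le (fun i => div_nonneg (ha i) (hb i).le) fun i => ?_
    rw [mul_div_assoc', div_le_div_iff₀ (hb i) (by linarith [ha i, hb i])]
    nlinarith [ha i, hab i]
  · exact fun h => h.of_nonneg_of_le (fun i => div_nonneg (ha i) (by linarith [ha i, hb i]))
      fun i => div_le_div_of_nonneg_left (ha i) (hb i) (le_add_of_nonneg_right (ha i))

lemma summable_iff_tsum_ofReal_lt_top {ι : Type*} {f : ι → ℝ} (hf : ∀ i, 0 ≤ f i) :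
    Summable f ↔ ∑' i, ENNReal.ofReal (f i) < ⊤ :=
  ⟨Summable.tsum_ofReal_lt_top, fun h => (ENNReal.summable_toReal h.ne).congr fun i =>
    ENNReal.toReal_ofReal (hf i)⟩

lemma hasSum_inv_choose_two_add_two (a : ℕ) :
    HasSum (fun j : ℕ => (((j + a + 2).choose 2 : ℕ) : ℝ)⁻¹) (2 / (a + 1)) := by
  set f : ℕ → ℝ := fun j => 2 / ((j + a + 1 : ℕ) : ℝ)
  have hterm : ∀ j : ℕ, (((j + a + 2).choose 2 : ℕ) : ℝ)⁻¹ = f j - f (j + 1) := by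
    intro j
    simp only [f, Nat.cast_choose_two]
    push_cast
    rw [show (j : ℝ) + a + 2 - 1 = j + a + 1 by ring]
    field_simp
    ring
  have hf : Filter.Tendsto f Filter.atTop (nhds 0) :=
    (tendsto_const_div_atTop_nhds_zero_nat 2).comp (Filter.tendsto_add_atTop_nat (a + 1))
  rw [hasSum_iff_tendsto_nat_of_nonneg (fun j => by positivity)]
  simp_rw [hterm, Finset.sum_range_sub']
  simpa [f] using tendsto_const_nhds.sub hf

lemma hasSum_ite_lt_inv_choose_two (k : ℕ) :
    HasSum (fun n : ℕ => if k < n + 2 then (((n + 2).choose 2 : ℕ) : ℝ)⁻¹ else 0)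
      (2 / max (k : ℝ) 1) := by
  rw [← hasSum_nat_add_iff' (k - 1),
    Finset.sum_eq_zero fun i hi => if_neg (by rw [Finset.mem_range] at hi; omega), sub_zero]
  have hmax : max (k : ℝ) 1 = ((k - 1 : ℕ) : ℝ) + 1 := by rcases k with _ | k <;> simp
  rw [hmax]
  refine (hasSum_inv_choose_two_add_two (k - 1)).congr_fun fun j => ?_
  rw [if_pos (by omega), add_assoc]

lemma tsum_ite_lt_ofReal_inv_choose_two (k : ℕ) :
    ∑' n : ℕ, (if k < n + 2 then ENNReal.ofReal (((n + 2).choose 2 : ℕ) : ℝ)⁻¹ else 0)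
      = ENNReal.ofReal (2 / max (k : ℝ) 1) := by
  have h := hasSum_ite_lt_inv_choose_two k
  rw [← h.tsum_eq, ENNReal.ofReal_tsum_of_nonneg (fun n => by positivity) h.summable]
  congr with n
  split_ifs <;> simp

section Kernel

variable {z : ℝ}

lemma one_sub_one_sub_pow_div_eq_geom_sum (hz : z ≠ 0) (m : ℕ) :
    (1 - (1 - z) ^ m) / z = ∑ k ∈ Finset.range m, (1 - z) ^ k := by
  rw [div_eq_iff hz, ← mul_neg_geom_sum, sub_sub_cancel, mul_comm]

lemma one_sub_one_sub_pow_div_mem_Icc (h0 : 0 < z) (h1 : z ≤ 1) (m : ℕ) :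
    (1 - (1 - z) ^ m) / z ∈ Icc (0 : ℝ) m := by
  have hw : 1 - z ∈ Icc (0 : ℝ) 1 := ⟨by linarith, by linarith⟩
  rw [one_sub_one_sub_pow_div_eq_geom_sum h0.ne']
  refine ⟨Finset.sum_nonneg fun k _ => pow_nonneg hw.1 k, ?_⟩
  simpa using Finset.sum_le_card_nsmul (Finset.range m) _ 1 fun k _ => pow_le_one₀ hw.1 hw.2

lemma norm_one_sub_one_sub_pow_div_le (h0 : 0 < z) (h1 : z ≤ 1) (m : ℕ) :
    ‖(1 - (1 - z) ^ m) / z‖ ≤ m := by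
  have h := one_sub_one_sub_pow_div_mem_Icc h0 h1 m
  rw [Real.norm_of_nonneg h.1]
  exact h.2

lemma tsum_ofReal_one_sub_one_sub_pow_div_div_choose_two (h0 : 0 < z) (h1 : z ≤ 1) :
    ∑' n : ℕ, ENNReal.ofReal ((1 - (1 - z) ^ (n + 2)) / z / ((n + 2).choose 2 : ℝ))
      = 2 + 2 * ENNReal.ofReal (-Real.log z) := by
  have hw0 : 0 ≤ 1 - z := by linarith
  have hlog := Real.hasSum_pow_div_log_of_abs_lt_one (x := 1 - z)
    (by rw [abs_of_nonneg hw0]; linarith)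
  rw [sub_sub_cancel] at hlog
  calc ∑' n : ℕ, ENNReal.ofReal ((1 - (1 - z) ^ (n + 2)) / z / ((n + 2).choose 2 : ℝ))
      = ∑' n : ℕ, ∑' k : ℕ, if k < n + 2 then
          ENNReal.ofReal ((1 - z) ^ k) * ENNReal.ofReal ((n + 2).choose 2 : ℝ)⁻¹ else 0 := by
        refine tsum_congr fun n => ?_
        rw [tsum_eq_sum (s := Finset.range (n + 2)) fun k hk => if_neg (by simpa using hk),
          one_sub_one_sub_pow_div_eq_geom_sum h0.ne', Finset.sum_div,
          ENNReal.ofReal_sum_of_nonneg fun k _ => by positivity]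
        refine Finset.sum_congr rfl fun k hk => ?_
        rw [if_pos (Finset.mem_range.1 hk), div_eq_mul_inv, ENNReal.ofReal_mul (pow_nonneg hw0 k)]
    _ = ∑' k : ℕ, ENNReal.ofReal ((1 - z) ^ k) * ENNReal.ofReal (2 / max (k : ℝ) 1) := by
        rw [ENNReal.tsum_comm]
        refine tsum_congr fun k => ?_
        rw [← tsum_ite_lt_ofReal_inv_choose_two, ← ENNReal.tsum_mul_left]
        simp_rw [mul_ite, mul_zero]
    _ = 2 + ∑' k : ℕ, 2 * ENNReal.ofReal ((1 - z) ^ (k + 1) / (k + 1)) := by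
        rw [tsum_eq_zero_add' ENNReal.summable]
        congr 1
        · simp
        · refine tsum_congr fun k => ?_
          rw [← ENNReal.ofReal_ofNat 2, ← ENNReal.ofReal_mul (by positivity),
            ← ENNReal.ofReal_mul (by positivity)]
          congr 1
          push_cast
          rw [max_eq_left (by linarith [k.cast_nonneg (α := ℝ)])]
          ring
    _ = 2 + 2 * ENNReal.ofReal (-Real.log z) := by
        rw [ENNReal.tsum_mul_left, ← ENNReal.ofReal_tsum_of_nonneg (fun k => by positivity)
          hlog.summable, hlog.tsum_eq]

end Kernel

section SetIntegral

variable {Λ : Measure ℝ}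

lemma setIntegral_one_sub_one_sub_pow_div_nonneg (m : ℕ) :
    0 ≤ ∫ z in Ioc 0 1, (1 - (1 - z) ^ m) / z ∂Λ :=
  setIntegral_nonneg measurableSet_Ioc fun _ hz => (one_sub_one_sub_pow_div_mem_Icc hz.1 hz.2 m).1

variable [IsFiniteMeasure Λ]

lemma integrableOn_one_sub_one_sub_pow_div (m : ℕ) :
    IntegrableOn (fun z => (1 - (1 - z) ^ m) / z) (Ioc 0 1) Λ :=
  Measure.integrableOn_of_bounded (measure_ne_top _ _)
    (by fun_prop : Measurable _).aestronglyMeasurable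
    ((ae_restrict_iff' measurableSet_Ioc).2
      (ae_of_all _ fun _ hz => norm_one_sub_one_sub_pow_div_le hz.1 hz.2 m))

lemma setIntegral_one_sub_one_sub_pow_div_le (m : ℕ) :
    ∫ z in Ioc 0 1, (1 - (1 - z) ^ m) / z ∂Λ ≤ m * Λ.real (Ioc 0 1) :=
  (Real.le_norm_self _).trans (norm_setIntegral_le_of_norm_le_const (measure_lt_top _ _)
    fun _ hz => norm_one_sub_one_sub_pow_div_le hz.1 hz.2 m)

lemma tsum_ofReal_setIntegral_div_choose_two :
    ∑' n : ℕ, ENNReal.ofReal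
        ((∫ z in Ioc 0 1, (1 - (1 - z) ^ (n + 2)) / z ∂Λ) / ((n + 2).choose 2 : ℝ))
      = 2 * Λ (Ioc 0 1) + 2 * ∫⁻ z in Ioc 0 1, ENNReal.ofReal (-Real.log z) ∂Λ := by
  calc _ = ∑' n : ℕ, ∫⁻ z in Ioc 0 1,
        ENNReal.ofReal ((1 - (1 - z) ^ (n + 2)) / z / ((n + 2).choose 2 : ℝ)) ∂Λ := by
        refine tsum_congr fun n => ?_
        rw [← integral_div]
        refine ofReal_integral_eq_lintegral_ofReal
          ((integrableOn_one_sub_one_sub_pow_div _).div_const _)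
          ((ae_restrict_iff' measurableSet_Ioc).2 (ae_of_all _ fun z hz => ?_))
        exact div_nonneg (one_sub_one_sub_pow_div_mem_Icc hz.1 hz.2 _).1 (by positivity)
    _ = ∫⁻ z in Ioc 0 1, ∑' n : ℕ,
        ENNReal.ofReal ((1 - (1 - z) ^ (n + 2)) / z / ((n + 2).choose 2 : ℝ)) ∂Λ :=
        (lintegral_tsum fun n => by fun_prop).symm
    _ = ∫⁻ z in Ioc 0 1, 2 + 2 * ENNReal.ofReal (-Real.log z) ∂Λ :=
        setLIntegral_congr_fun measurableSet_Ioc fun z hz =>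
          tsum_ofReal_one_sub_one_sub_pow_div_div_choose_two hz.1 hz.2
    _ = _ := by
        rw [lintegral_add_left measurable_const, lintegral_const_mul' _ _ (by simp),
          setLIntegral_const]

end SetIntegral

theorem stmt7_general (Λ : Measure ℝ) [IsFiniteMeasure Λ]
    (γ : ℕ → ℝ)
    (hγ : ∀ n : ℕ, γ n = ∫ z in Set.Ioc (0:ℝ) 1, (1 - (1 - z) ^ n) / z ∂Λ) :
    (Summable fun n : ℕ => γ (n + 2) / (((n + 2).choose 2 : ℝ) + γ (n + 2)))
      ↔ (∫⁻ z in Set.Ioc (0:ℝ) 1, ENNReal.ofReal (-Real.log z) ∂Λ) < ⊤ := by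
  have hγ_nonneg : ∀ n, 0 ≤ γ n := fun n => hγ n ▸ setIntegral_one_sub_one_sub_pow_div_nonneg n
  have hchoose : ∀ n : ℕ, (0 : ℝ) < ((n + 2).choose 2 : ℝ) := fun n => by
    exact_mod_cast Nat.choose_pos (by omega)
  have hγ_le : ∀ n : ℕ, γ (n + 2) ≤ 2 * Λ.real (Ioc 0 1) * ((n + 2).choose 2 : ℝ) := by
    intro n
    have hn : ((n + 2 : ℕ) : ℝ) ≤ 2 * ((n + 2).choose 2 : ℝ) := by
      rw [Nat.cast_choose_two]
      push_cast
      nlinarith [n.cast_nonneg (α := ℝ)]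
    calc γ (n + 2) ≤ (n + 2 : ℕ) * Λ.real (Ioc 0 1) :=
          hγ _ ▸ setIntegral_one_sub_one_sub_pow_div_le _
      _ ≤ 2 * ((n + 2).choose 2 : ℝ) * Λ.real (Ioc 0 1) := by gcongr
      _ = 2 * Λ.real (Ioc 0 1) * ((n + 2).choose 2 : ℝ) := by ring
  rw [summable_div_add_iff_summable_div (fun n => hγ_nonneg _) hchoose hγ_le,
    summable_iff_tsum_ofReal_lt_top fun n => div_nonneg (hγ_nonneg _) (hchoose n).le]
  simp_rw [hγ]
  rw [tsum_ofReal_setIntegral_div_choose_two, ENNReal.add_lt_top]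
  simp [lt_top_iff_ne_top, ENNReal.mul_eq_top, measure_ne_top]

/-- Coming-down-from-infinity criterion: with `γ(n) = ∫ (1−(1−z)^n) z^{−1} Λ(dz)`,
the series `∑_{n≥2} γ(n)/(C(n,2)+γ(n))` converges iff `∫ (−log z) Λ(dz) < ∞`. -/
theorem stmt7 (Λ : Measure ℝ) [IsFiniteMeasure Λ]
    (hΛsupp : Λ (Set.Icc (0:ℝ) 1)ᶜ = 0) (hΛ0 : Λ {0} = 0)
    (γ : ℕ → ℝ)
    (hγ : ∀ n : ℕ, γ n = ∫ z in Set.Ioc (0:ℝ) 1, (1 - (1 - z) ^ n) / z ∂Λ) :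
    (Summable fun n : ℕ => γ (n + 2) / (((n + 2).choose 2 : ℝ) + γ (n + 2)))
      ↔ (∫⁻ z in Set.Ioc (0:ℝ) 1, ENNReal.ofReal (-Real.log z) ∂Λ) < ⊤ :=
  stmt7_general Λ γ hγ
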